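/- Suppose (x, X, y, Y₁₂, α) lacks only (P4a), α₁ = 0, X₁₁ > 0, and α₂ < α₂⁻. Then the point (x, X, y, Y₁₂, (0, α₂⁻)) satisfies all of the conditions (L), (P3), (P4a), (P4b), and (P5). -/

import Mathlib

open Matrix

set_option linter.unusedVariables false

/-- Linear conditions (L). -/
def Lcond (x1 x2 X11 X12 X22 y1 y2 Y12 a1 a2 : ℝ) : Prop :=
  X11 ≤ x1 ∧ x1 ≤ y1 ∧ X22 ≤ x2 ∧ x2 ≤ y2 ∧
  max 0 (x1 - a1 + x2 - a2 - Y12) ≤ X12 ∧ X12 ≤ min (x1 - a1) (x2 - a2) ∧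
  0 ≤ a1 ∧ a1 ≤ y1 - Y12 ∧ 0 ≤ a2 ∧ a2 ≤ y2 - Y12 ∧
  max 0 (y1 + y2 - 1) ≤ Y12 ∧ Y12 ≤ min y1 y2

/-- PSD condition (P3). -/
def P3cond (x1 x2 X11 X12 X22 y1 y2 Y12 a1 a2 : ℝ) : Prop :=
  (!![Y12, x1 - a1, x2 - a2;
      x1 - a1, x1 - a1, X12;
      x2 - a2, X12, x2 - a2] : Matrix (Fin 3) (Fin 3) ℝ).PosSemidef

/-- PSD condition (P4a). -/
def P4acond (x1 x2 X11 X12 X22 y1 y2 Y12 a1 a2 : ℝ) : Prop :=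
  (!![y1 - Y12, 0, a1, 0;
      0, Y12, x1 - a1, x2 - a2;
      a1, x1 - a1, X11, X12;
      0, x2 - a2, X12, x2 - a2] : Matrix (Fin 4) (Fin 4) ℝ).PosSemidef

/-- PSD condition (P4b). -/
def P4bcond (x1 x2 X11 X12 X22 y1 y2 Y12 a1 a2 : ℝ) : Prop :=
  (!![y2 - Y12, 0, 0, a2;
      0, Y12, x1 - a1, x2 - a2;
      0, x1 - a1, x1 - a1, X12;
      a2, x2 - a2, X12, X22] : Matrix (Fin 4) (Fin 4) ℝ).PosSemidef

/-- PSD condition (P5). -/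
def P5cond (x1 x2 X11 X12 X22 y1 y2 Y12 a1 a2 : ℝ) : Prop :=
  (!![y1 - Y12, 0, 0, a1, 0;
      0, y2 - Y12, 0, 0, a2;
      0, 0, Y12, x1 - a1, x2 - a2;
      a1, 0, x1 - a1, X11, X12;
      0, a2, x2 - a2, X12, X22] : Matrix (Fin 5) (Fin 5) ℝ).PosSemidef

/-- (x, X, y, Y₁₂, α) lacks only (P4a): it satisfies (L), (P3), (P4b), (P5)
but violates (P4a). -/
def LacksOnlyP4a (x1 x2 X11 X12 X22 y1 y2 Y12 a1 a2 : ℝ) : Prop :=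
  Lcond x1 x2 X11 X12 X22 y1 y2 Y12 a1 a2 ∧
  P3cond x1 x2 X11 X12 X22 y1 y2 Y12 a1 a2 ∧
  P4bcond x1 x2 X11 X12 X22 y1 y2 Y12 a1 a2 ∧
  P5cond x1 x2 X11 X12 X22 y1 y2 Y12 a1 a2 ∧
  ¬ P4acond x1 x2 X11 X12 X22 y1 y2 Y12 a1 a2

/-- α₂⁻ = x₂ − X₁₂x₁/X₁₁ − (θ + √Δ)/(2X₁₁), where θ = Y₁₂X₁₁ − x₁² and
Δ = θ(θ + 4X₁₂(x₁ − X₁₂)). -/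
noncomputable def alpha2minus (x1 x2 X11 X12 Y12 : ℝ) : ℝ :=
  x2 - X12 * x1 / X11 -
    ((Y12 * X11 - x1 ^ 2) +
      Real.sqrt ((Y12 * X11 - x1 ^ 2) *
        ((Y12 * X11 - x1 ^ 2) + 4 * X12 * (x1 - X12)))) / (2 * X11)

/-- α₂⁺ = x₂ − X₁₂x₁/X₁₁ − (θ − √Δ)/(2X₁₁), where θ = Y₁₂X₁₁ − x₁² and
Δ = θ(θ + 4X₁₂(x₁ − X₁₂)). -/
noncomputable def alpha2plus (x1 x2 X11 X12 Y12 : ℝ) : ℝ :=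
  x2 - X12 * x1 / X11 -
    ((Y12 * X11 - x1 ^ 2) -
      Real.sqrt ((Y12 * X11 - x1 ^ 2) *
        ((Y12 * X11 - x1 ^ 2) + 4 * X12 * (x1 - X12)))) / (2 * X11)

/-!
With `α₁ = 0`, the quadratic forms of (P3)–(P5) split into squares weighted by `y₁ - Y₁₂` or
`x₁ - X₁₁` (nonnegative by (L)), the form of the 3×3 block
`M(α₂) = [[Y₁₂, x₁, x₂ - α₂], [x₁, X₁₁, X₁₂], [x₂ - α₂, X₁₂, x₂ - α₂]]`, and, in (P4b) and (P5),
the form of the 2×2 border block `[[y₂ - Y₁₂, α₂], [α₂, X₂₂ - x₂ + α₂]]`. Expanding,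
`det M(α₂) = -X₁₁ (α₂ - α₂⁻)(α₂ - α₂⁺)`, so `M(α₂⁻)` is singular and, its leading minors `Y₁₂` and
`θ` being positive, positive semidefinite.

At the given `α₂ < α₂⁻` the principal 3×3 and 4×4 minors of (P5) are nonnegative while
`det M(α₂) < 0`. This forces `θ > 0` and `α₂ > 0`, and, since `X₁₁ (α₂⁺ - α₂⁻) = √Δ ≥ θ`, yields
`α₂⁻ ≤ y₂ - Y₁₂` and `(α₂⁻)² ≤ (y₂ - Y₁₂)(X₂₂ - x₂ + α₂⁻)`: the border block is positive semidefinite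
at `α₂⁻`.
-/

theorem posSemidef_fin_two_of_minors {a b d : ℝ} (ha : 0 < a)
    (hdet : 0 ≤ (!![a, b; b, d] : Matrix (Fin 2) (Fin 2) ℝ).det) :
    (!![a, b; b, d] : Matrix (Fin 2) (Fin 2) ℝ).PosSemidef := by
  refine .of_dotProduct_mulVec_nonneg ?_ fun v => ?_
  · ext i j; fin_cases i <;> fin_cases j <;> rfl
  have ldl : a * (star v ⬝ᵥ (!![a, b; b, d] *ᵥ v))
      = (a * v 0 + b * v 1) ^ 2 + (!![a, b; b, d] : Matrix (Fin 2) (Fin 2) ℝ).det * v 1 ^ 2 := by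
    simp [dotProduct, mulVec, Fin.sum_univ_two, det_fin_two_of]; ring
  exact nonneg_of_mul_nonneg_right (ldl ▸ by positivity) ha

theorem posSemidef_fin_three_of_minors {a b c d e f : ℝ} (ha : 0 < a) (hab : 0 < a * d - b ^ 2)
    (hdet : 0 ≤ (!![a, b, c; b, d, e; c, e, f] : Matrix (Fin 3) (Fin 3) ℝ).det) :
    (!![a, b, c; b, d, e; c, e, f] : Matrix (Fin 3) (Fin 3) ℝ).PosSemidef := by
  refine .of_dotProduct_mulVec_nonneg ?_ fun v => ?_
  · ext i j; fin_cases i <;> fin_cases j <;> rfl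
  have ldl : a * (a * d - b ^ 2) * (star v ⬝ᵥ (!![a, b, c; b, d, e; c, e, f] *ᵥ v))
      = (a * d - b ^ 2) * (a * v 0 + b * v 1 + c * v 2) ^ 2
        + ((a * d - b ^ 2) * v 1 + (a * e - b * c) * v 2) ^ 2
        + a * (!![a, b, c; b, d, e; c, e, f] : Matrix (Fin 3) (Fin 3) ℝ).det * v 2 ^ 2 := by
    simp [dotProduct, mulVec, Fin.sum_univ_three, det_fin_three]; ring
  exact nonneg_of_mul_nonneg_right (ldl ▸ by positivity) (mul_pos ha hab)

section Alpha2

variable {x1 x2 X11 X12 Y12 : ℝ}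

theorem mul_sub_alpha2minus_mul_sub_alpha2plus (hX : X11 ≠ 0)
    (hΔ : 0 ≤ (Y12 * X11 - x1 ^ 2) * (Y12 * X11 - x1 ^ 2 + 4 * X12 * (x1 - X12))) (α : ℝ) :
    X11 * (α - alpha2minus x1 x2 X11 X12 Y12) * (α - alpha2plus x1 x2 X11 X12 Y12) =
      X11 * (x2 - α) ^ 2 - (Y12 * X11 - x1 ^ 2 + 2 * x1 * X12) * (x2 - α) + Y12 * X12 ^ 2 := by
  unfold alpha2minus alpha2plus
  set s := √((Y12 * X11 - x1 ^ 2) * (Y12 * X11 - x1 ^ 2 + 4 * X12 * (x1 - X12)))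
  have hs : s ^ 2 = _ := Real.sq_sqrt hΔ
  field_simp
  linear_combination (-1) * hs

theorem theta_le_mul_alpha2plus_sub_alpha2minus (hX : 0 < X11) (hθ : 0 ≤ Y12 * X11 - x1 ^ 2)
    (hX12x1 : 0 ≤ X12 * (x1 - X12)) :
    Y12 * X11 - x1 ^ 2 ≤ X11 * (alpha2plus x1 x2 X11 X12 Y12 - alpha2minus x1 x2 X11 X12 Y12) := by
  have hΔ : 0 ≤ (Y12 * X11 - x1 ^ 2) * (Y12 * X11 - x1 ^ 2 + 4 * X12 * (x1 - X12)) :=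
    mul_nonneg hθ (by linarith)
  have hs : X11 * (alpha2plus x1 x2 X11 X12 Y12 - alpha2minus x1 x2 X11 X12 Y12) =
      √((Y12 * X11 - x1 ^ 2) * (Y12 * X11 - x1 ^ 2 + 4 * X12 * (x1 - X12))) := by
    unfold alpha2minus alpha2plus
    field_simp
    ring
  rw [hs, Real.le_sqrt hθ hΔ]
  linarith [mul_nonneg hθ hX12x1]

theorem le_sub_alpha2minus (hX : 0 < X11) (hθ : 0 ≤ Y12 * X11 - x1 ^ 2) (hX12 : 0 ≤ X12)
    (hx : X11 ≤ x1) : X12 ≤ x2 - alpha2minus x1 x2 X11 X12 Y12 := by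
  have hs : 2 * X11 * (x2 - alpha2minus x1 x2 X11 X12 Y12) = 2 * X12 * x1 + (Y12 * X11 - x1 ^ 2) +
      √((Y12 * X11 - x1 ^ 2) * (Y12 * X11 - x1 ^ 2 + 4 * X12 * (x1 - X12))) := by
    unfold alpha2minus
    field_simp
    ring
  refine le_of_mul_le_mul_left ?_ (by positivity : 0 < 2 * X11)
  linarith [Real.sqrt_nonneg ((Y12 * X11 - x1 ^ 2) * (Y12 * X11 - x1 ^ 2 + 4 * X12 * (x1 - X12))),
    mul_le_mul_of_nonneg_left hx hX12]

theorem posSemidef_block_alpha2minus (hX : 0 < X11) (hθ : 0 < Y12 * X11 - x1 ^ 2)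
    (hX12x1 : 0 ≤ X12 * (x1 - X12)) :
    (!![Y12, x1, x2 - alpha2minus x1 x2 X11 X12 Y12; x1, X11, X12;
      x2 - alpha2minus x1 x2 X11 X12 Y12, X12, x2 - alpha2minus x1 x2 X11 X12 Y12] :
        Matrix (Fin 3) (Fin 3) ℝ).PosSemidef := by
  have hfac := mul_sub_alpha2minus_mul_sub_alpha2plus (x2 := x2) hX.ne'
    (mul_nonneg hθ.le (by linarith : 0 ≤ Y12 * X11 - x1 ^ 2 + 4 * X12 * (x1 - X12)))
    (alpha2minus x1 x2 X11 X12 Y12)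
  refine posSemidef_fin_three_of_minors (pos_of_mul_pos_left ?_ hX.le) hθ ?_
  · linarith [sq_nonneg x1]
  · simp [det_fin_three]; linarith

end Alpha2

section BorderBounds

/- The letters stand for `k = X₁₁`, `am = α₂⁻`, `ap = α₂⁺`, `β = y₂ - Y₁₂`, `γ = x₂ - X₂₂`; the
hypotheses `hR` and `hG` are the 3×3 and 4×4 principal minors of (P5) at `α = α₂`. -/
variable {θ k α am ap β γ : ℝ}

theorem pos_and_lt_of_mul_sub_mul_sub_le (hθ : 0 ≤ θ) (hk : 0 < k) (hgap : θ ≤ k * (ap - am))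
    (hα : α < am) (hR : k * (α - am) * (α - ap) ≤ θ * (α - γ)) : 0 < θ ∧ γ < α := by
  have hap : am ≤ ap := sub_nonneg.1 (nonneg_of_mul_nonneg_right (hθ.trans hgap) hk)
  have hφ : 0 < k * (α - am) * (α - ap) :=
    mul_pos_of_neg_of_neg (mul_neg_of_pos_of_neg hk (by linarith)) (by linarith)
  rcases pos_and_pos_or_neg_and_neg_of_mul_pos (hφ.trans_le hR) with h | h
  · exact ⟨h.1, by linarith [h.2]⟩
  · exact absurd h.1 hθ.not_gt

theorem mul_sub_le_mul_sub_mul_sub (hk : 0 < k) (hgap : θ ≤ k * (ap - am)) (hα : α < am) :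
    θ * (am - α) ≤ k * (α - am) * (α - ap) := by
  nlinarith [mul_nonneg (sub_nonneg.2 hα.le) (sub_nonneg.2 hgap), mul_pos hk (sub_pos.2 hα)]

theorem le_of_sq_mul_le (hθ : 0 < θ) (hk : 0 < k) (hgap : θ ≤ k * (ap - am)) (hα0 : 0 < α)
    (hα : α < am) (hαβ : α ≤ β) (hγ : 0 ≤ γ)
    (hG : θ * α ^ 2 ≤ β * (θ * (α - γ) - k * (α - am) * (α - ap))) : am ≤ β := by
  have hφ := mul_sub_le_mul_sub_mul_sub hk hgap hα
  have hβ : 0 < β := hα0.trans_le hαβ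
  have h : θ * (β * (am - α)) ≤ θ * (α * (β - α)) := by
    nlinarith [mul_le_mul_of_nonneg_left hφ hβ.le, mul_nonneg hβ.le (mul_nonneg hθ.le hγ)]
  have h' := le_of_mul_le_mul_left h hθ
  nlinarith [mul_le_mul_of_nonneg_right hαβ (sub_nonneg.2 hαβ)]

theorem sq_le_mul_sub_of_sq_mul_le (hθ : 0 < θ) (hk : 0 < k) (hgap : θ ≤ k * (ap - am))
    (hα0 : 0 < α) (hα : α < am) (hαβ : α ≤ β) (hγ : 0 ≤ γ)
    (hG : θ * α ^ 2 ≤ β * (θ * (α - γ) - k * (α - am) * (α - ap))) : am ^ 2 ≤ β * (am - γ) := by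
  have hφ := mul_sub_le_mul_sub_mul_sub hk hgap hα
  have hamβ := le_of_sq_mul_le hθ hk hgap hα0 hα hαβ hγ hG
  refine le_of_mul_le_mul_left ?_ hθ
  nlinarith [mul_le_mul_of_nonneg_left hφ (hα0.le.trans hαβ),
    mul_nonneg (mul_nonneg hθ.le (sub_nonneg.2 hα.le)) (by linarith : (0 : ℝ) ≤ 2 * β - am - α)]

end BorderBounds

section ZeroAlpha1

variable {x1 x2 X11 X12 X22 y1 y2 Y12 α α' : ℝ}

theorem Lcond.of_le_alpha2 (hL : Lcond x1 x2 X11 X12 X22 y1 y2 Y12 0 α) (hα : α ≤ α')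
    (hα'y : α' ≤ y2 - Y12) (hX12 : X12 ≤ x2 - α') : Lcond x1 x2 X11 X12 X22 y1 y2 Y12 0 α' := by
  obtain ⟨h1, h2, h3, h4, hlo, hhi, h7, h8, hα0, -, h11, h12⟩ := hL
  refine ⟨h1, h2, h3, h4, max_le (le_max_left _ _ |>.trans hlo) ?_, le_min ?_ hX12, h7, h8,
    hα0.trans hα, hα'y, h11, h12⟩
  · linarith [le_max_right _ _ |>.trans hlo]
  · exact hhi.trans (min_le_left _ _)

theorem P5cond.principal_minors_nonneg (h : P5cond x1 x2 X11 X12 X22 y1 y2 Y12 0 α) :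
    0 ≤ Y12 * X11 - x1 ^ 2 ∧
      0 ≤ (Y12 * X11 - x1 ^ 2) * (α - (x2 - X22)) -
        (X11 * (x2 - α) ^ 2 - (Y12 * X11 - x1 ^ 2 + 2 * x1 * X12) * (x2 - α) + Y12 * X12 ^ 2) ∧
      (Y12 * X11 - x1 ^ 2) * α ^ 2 ≤ (y2 - Y12) * ((Y12 * X11 - x1 ^ 2) * (α - (x2 - X22)) -
        (X11 * (x2 - α) ^ 2 - (Y12 * X11 - x1 ^ 2 + 2 * x1 * X12) * (x2 - α) + Y12 * X12 ^ 2)) := by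
  have hθ := (h.submatrix ![2, 3]).det_nonneg
  have hR := (h.submatrix ![2, 3, 4]).det_nonneg
  have hG : 0 ≤ (!![y2 - Y12, 0, 0, α; 0, Y12, x1, x2 - α; 0, x1, X11, X12;
      α, x2 - α, X12, X22] : Matrix (Fin 4) (Fin 4) ℝ).det := by
    refine (h.submatrix ![1, 2, 3, 4]).det_nonneg.trans_eq (congrArg det ?_)
    ext i j; fin_cases i <;> fin_cases j <;> simp
  rw [det_fin_two] at hθ
  rw [det_fin_three] at hR
  simp at hθ hR
  simp [det_succ_row_zero, Fin.sum_univ_succ, Fin.succAbove] at hG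
  exact ⟨by linarith, by linarith, by linarith⟩

theorem posSemidef_conditions_of_blocks
    (hM : (!![Y12, x1, x2 - α; x1, X11, X12; x2 - α, X12, x2 - α] : Matrix (Fin 3) (Fin 3) ℝ).PosSemidef)
    (hB : (!![y2 - Y12, α; α, X22 - (x2 - α)] : Matrix (Fin 2) (Fin 2) ℝ).PosSemidef)
    (hx : X11 ≤ x1) (hy : 0 ≤ y1 - Y12) :
    P3cond x1 x2 X11 X12 X22 y1 y2 Y12 0 α ∧ P4acond x1 x2 X11 X12 X22 y1 y2 Y12 0 α ∧
      P4bcond x1 x2 X11 X12 X22 y1 y2 Y12 0 α ∧ P5cond x1 x2 X11 X12 X22 y1 y2 Y12 0 α := by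
  have qM (u v w : ℝ) := hM.dotProduct_mulVec_nonneg ![u, v, w]
  have qB (u v : ℝ) := hB.dotProduct_mulVec_nonneg ![u, v]
  simp [dotProduct, mulVec, Fin.sum_univ_three, Fin.sum_univ_two] at qM qB
  refine ⟨.of_dotProduct_mulVec_nonneg ?_ fun v => ?_, .of_dotProduct_mulVec_nonneg ?_ fun v => ?_,
    .of_dotProduct_mulVec_nonneg ?_ fun v => ?_, .of_dotProduct_mulVec_nonneg ?_ fun v => ?_⟩
  all_goals first
    | (ext i j; fin_cases i <;> fin_cases j <;> rfl)
    | simp [dotProduct, mulVec, Fin.sum_univ_succ]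
  · linarith [qM (v 0) (v 1) (v 2), mul_nonneg (sub_nonneg.2 hx) (sq_nonneg (v 1))]
  · linarith [qM (v 1) (v 2) (v 3), mul_nonneg hy (sq_nonneg (v 0))]
  · linarith [qM (v 1) (v 2) (v 3), qB (v 0) (v 3), mul_nonneg (sub_nonneg.2 hx) (sq_nonneg (v 2))]
  · linarith [qM (v 2) (v 3) (v 4), qB (v 1) (v 4), mul_nonneg hy (sq_nonneg (v 0))]

end ZeroAlpha1

/-- If (x, X, y, Y₁₂, α) lacks only (P4a), α₁ = 0, X₁₁ > 0 and α₂ < α₂⁻, then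
(x, X, y, Y₁₂, (0, α₂⁻)) satisfies (L), (P3), (P4a), (P4b) and (P5). -/
theorem stmt12 (x1 x2 X11 X12 X22 y1 y2 Y12 a2 : ℝ)
    (h : LacksOnlyP4a x1 x2 X11 X12 X22 y1 y2 Y12 0 a2)
    (hX : 0 < X11) (hlt : a2 < alpha2minus x1 x2 X11 X12 Y12) :
    Lcond x1 x2 X11 X12 X22 y1 y2 Y12 0 (alpha2minus x1 x2 X11 X12 Y12) ∧
    P3cond x1 x2 X11 X12 X22 y1 y2 Y12 0 (alpha2minus x1 x2 X11 X12 Y12) ∧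
    P4acond x1 x2 X11 X12 X22 y1 y2 Y12 0 (alpha2minus x1 x2 X11 X12 Y12) ∧
    P4bcond x1 x2 X11 X12 X22 y1 y2 Y12 0 (alpha2minus x1 x2 X11 X12 Y12) ∧
    P5cond x1 x2 X11 X12 X22 y1 y2 Y12 0 (alpha2minus x1 x2 X11 X12 Y12) := by
  obtain ⟨hL, -, -, hP5, -⟩ := h
  obtain ⟨hx, -, hX22, -, hlo, hhi, -, hy, -, hab, -, -⟩ := id hL
  have hX12 : 0 ≤ X12 := (le_max_left _ _).trans hlo
  have hX12x1 : 0 ≤ X12 * (x1 - X12) :=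
    mul_nonneg hX12 (sub_nonneg.2 (by simpa using hhi.trans (min_le_left _ _)))
  obtain ⟨hθ, hR, hG⟩ := hP5.principal_minors_nonneg
  have hgap := theta_le_mul_alpha2plus_sub_alpha2minus (x2 := x2) hX hθ hX12x1
  have hfac := mul_sub_alpha2minus_mul_sub_alpha2plus (x2 := x2) hX.ne'
    (mul_nonneg hθ (by linarith : 0 ≤ Y12 * X11 - x1 ^ 2 + 4 * X12 * (x1 - X12)))
  rw [← hfac] at hR hG
  set am := alpha2minus x1 x2 X11 X12 Y12
  have hγ : 0 ≤ x2 - X22 := sub_nonneg.2 hX22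
  obtain ⟨hθpos, hγa⟩ := pos_and_lt_of_mul_sub_mul_sub_le hθ hX hgap hlt (sub_nonneg.1 hR)
  have ha : 0 < a2 := hγ.trans_lt hγa
  have ham := le_of_sq_mul_le hθpos hX hgap ha hlt hab hγ hG
  have hsq := sq_le_mul_sub_of_sq_mul_le hθpos hX hgap ha hlt hab hγ hG
  have hB : (!![y2 - Y12, am; am, X22 - (x2 - am)] : Matrix (Fin 2) (Fin 2) ℝ).PosSemidef := by
    refine posSemidef_fin_two_of_minors (ha.trans_le hab) ?_
    rw [det_fin_two_of]; linarith
  exact ⟨hL.of_le_alpha2 hlt.le ham (le_sub_alpha2minus hX hθ hX12 hx),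
    posSemidef_conditions_of_blocks (posSemidef_block_alpha2minus hX hθpos hX12x1) hB hx hy⟩
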